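/- arXiv:math/0012034 — 2 statements merged into one kernel-verified Lean document; each statement's English description precedes it below -/
import Mathlib

section
/- With the same recursive construction ($U_k = \tilde\Delta_k U_{<k}$, $\tilde\Delta_k$ antisymmetric, $U_{<k} = I + \sum_{k' < k} U_{k'}$), the following orthogonality defect identity holds for every $k$: $U_{<k}^{\,t}\, U_{<k} - I = \sum_{k' < k} U_{k'}^{\,t}\, U_{k'}$. -/
open Matrix

/-- Orthogonality defect identity:
`U_{<k}ᵀ U_{<k} - I = ∑_{k' < k} U_{k'}ᵀ U_{k'}`. -/
theorem stmt_9 (N : ℕ) (hN : 1 ≤ N) (M : ℤ)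
    (Δ U Ult : ℤ → Matrix (Fin N) (Fin N) ℝ)
    (hΔanti : ∀ k, (Δ k)ᵀ = -Δ k)
    (hΔsupp : ∀ k : ℤ, k ≤ -M ∨ (-10 : ℤ) < k → Δ k = 0)
    (hUlt : ∀ k : ℤ, Ult k = 1 + ∑ k' ∈ Finset.Ioo (-M) k, U k')
    (hU : ∀ k : ℤ, U k = Δ k * Ult k) :
    ∀ k : ℤ, (Ult k)ᵀ * Ult k - 1 = ∑ k' ∈ Finset.Ioo (-M) k, (U k')ᵀ * U k' := by
  have key : ∀ k : ℤ, (U k)ᵀ * Ult k + (Ult k)ᵀ * U k = 0 := by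
    intro k
    rw [hU k, transpose_mul, hΔanti]
    simp [Matrix.mul_assoc, Matrix.neg_mul, Matrix.mul_neg]
  have h0 : (Ult (-M+1))ᵀ * Ult (-M+1) - 1 = ∑ k' ∈ Finset.Ioo (-M) (-M+1), (U k')ᵀ * U k' := by
    have : Finset.Ioo (-M) (-M + 1) = (∅ : Finset ℤ) := by
      ext m; simp [Finset.mem_Ioo]
    simp [hUlt, this]
  have h1 : ∀ k : ℤ, -M + 1 ≤ k →
      (Ult k)ᵀ * Ult k - 1 = ∑ k' ∈ Finset.Ioo (-M) k, (U k')ᵀ * U k' →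
      (Ult (k+1))ᵀ * Ult (k+1) - 1 = ∑ k' ∈ Finset.Ioo (-M) (k+1), (U k')ᵀ * U k' := by
    intro k hk ih
    have hins : Finset.Ioo (-M) (k + 1) = insert k (Finset.Ioo (-M) k) := by
      ext m; simp [Finset.mem_Ioo]; omega
    have hUlt' : Ult (k + 1) = Ult k + U k := by
      rw [hUlt (k + 1), hUlt k, hins, Finset.sum_insert (by simp)]
      abel
    rw [hins, Finset.sum_insert (by simp), hUlt', transpose_add]
    have hkey := key k
    linear_combination (norm := noncomm_ring) ih + hkey
  have main : ∀ k : ℤ, -M + 1 ≤ k →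
      (Ult k)ᵀ * Ult k - 1 = ∑ k' ∈ Finset.Ioo (-M) k, (U k')ᵀ * U k' :=
    fun k hk => Int.le_induction
      (motive := fun k _ => (Ult k)ᵀ * Ult k - 1 = ∑ k' ∈ Finset.Ioo (-M) k, (U k')ᵀ * U k')
      h0 h1 k hk
  intro k
  rcases le_or_gt k (-M + 1) with h | h
  · have : Finset.Ioo (-M) k = (∅ : Finset ℤ) := by
      ext m; simp [Finset.mem_Ioo]; omega
    simp [hUlt, this]
  · exact main k h.le
end

section
/- Let $N \geq 1$, let $(\tilde\Delta_k)_{-M<k\leq-10}$ be antisymmetric real $N\times N$ matrices with operator norms $\|\tilde\Delta_k\|_{op} \leq c_k$, where $(c_k)$ is a nonnegative sequence with $\sum_{k} c_k^2 \leq \varepsilon^2 \leq 1/4$. Define $U_k = \tilde\Delta_k U_{<k}$, $U_{<k} = I + \sum_{-M<k'<k} U_{k'}$. Then for all $k$: $\|U_{<k}\|_{op} \leq \sqrt{2}$ and $\|U_k\|_{op} \leq \sqrt{2}\, c_k$. -/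
open Matrix

/-- The operator norm of a real `N × N` matrix acting on Euclidean space. -/
noncomputable def matOpNorm {N : ℕ} (A : Matrix (Fin N) (Fin N) ℝ) : ℝ :=
  ‖LinearMap.toContinuousLinearMap (Matrix.toEuclideanLin A)‖

open scoped Matrix.Norms.L2Operator in
lemma matOpNorm_eq_norm {N : ℕ} (A : Matrix (Fin N) (Fin N) ℝ) : matOpNorm A = ‖A‖ := rfl

/-- If the `Δ̃_k` are antisymmetric with `‖Δ̃_k‖_op ≤ c_k`,
`∑ c_k² ≤ ε² ≤ 1/4`, and `U_k = Δ̃_k U_{<k}`, `U_{<k} = I + ∑_{-M<k'<k} U_{k'}`, then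
`‖U_{<k}‖_op ≤ √2` and `‖U_k‖_op ≤ √2 c_k` for all `k`. -/
theorem stmt_16 (N : ℕ) (hN : 1 ≤ N) (M : ℤ) (ε : ℝ)
    (c : ℤ → ℝ) (hc : ∀ k, 0 ≤ c k)
    (hcsum : Summable fun k => (c k) ^ 2)
    (hcε : (∑' k : ℤ, (c k) ^ 2) ≤ ε ^ 2) (hε : ε ^ 2 ≤ 1 / 4)
    (Δ U Ult : ℤ → Matrix (Fin N) (Fin N) ℝ)
    (hΔanti : ∀ k, (Δ k)ᵀ = -Δ k)
    (hΔnorm : ∀ k, matOpNorm (Δ k) ≤ c k)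
    (hΔsupp : ∀ k : ℤ, k ≤ -M ∨ (-10 : ℤ) < k → Δ k = 0)
    (hUlt : ∀ k : ℤ, Ult k = 1 + ∑ k' ∈ Finset.Ioo (-M) k, U k')
    (hU : ∀ k : ℤ, U k = Δ k * Ult k) :
    ∀ k : ℤ, matOpNorm (Ult k) ≤ Real.sqrt 2 ∧ matOpNorm (U k) ≤ Real.sqrt 2 * c k := by
  open scoped Matrix.Norms.L2Operator in
  simp only [matOpNorm_eq_norm] at hΔnorm ⊢
  haveI : NeZero N := ⟨by omega⟩
  have hnorm_one : ‖(1 : Matrix (Fin N) (Fin N) ℝ)‖ = 1 := by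
    rw [Matrix.cstar_norm_def, _root_.map_one]
    exact ContinuousLinearMap.norm_id
  -- key inductive bound on the square of the norm of `Ult k`
  have key : ∀ k : ℤ, -M + 1 ≤ k →
      ‖Ult k‖ ^ 2 ≤ ∏ k' ∈ Finset.Ioo (-M) k, (1 + c k' ^ 2) := by
    intro k
    refine Int.le_induction (motive := fun k _ => ‖Ult k‖ ^ 2 ≤ ∏ k' ∈ Finset.Ioo (-M) k, (1 + c k' ^ 2)) ?_ ?_ k
    ·
      have he : Finset.Ioo (-M) (-M + 1) = (∅ : Finset ℤ) := by
        apply Finset.eq_empty_of_forall_notMem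
        intro x hx
        simp only [Finset.mem_Ioo] at hx
        omega
      show ‖Ult (-M+1)‖ ^ 2 ≤ ∏ k' ∈ Finset.Ioo (-M) (-M+1), (1 + c k' ^ 2)
      rw [hUlt, he]
      simp [hnorm_one]
    · intro k hk ih
      have hins : Finset.Ioo (-M) (k + 1) = insert k (Finset.Ioo (-M) k) := by
        ext x
        simp only [Finset.mem_Ioo, Finset.mem_insert]
        omega
      have hnotmem : k ∉ Finset.Ioo (-M) k := by simp
      have hstep : Ult (k + 1) = Ult k + Δ k * Ult k := by
        rw [hUlt (k + 1), hins, Finset.sum_insert hnotmem, hU k, hUlt k]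
        noncomm_ring
      -- conjugate transpose computation
      have hH : (Δ k)ᴴ = -(Δ k) := by
        rw [Matrix.conjTranspose_eq_transpose_of_trivial, hΔanti]
      have hCT : (Ult (k + 1))ᴴ * Ult (k + 1)
          = (Ult k)ᴴ * Ult k + (Δ k * Ult k)ᴴ * (Δ k * Ult k) := by
        rw [hstep]
        simp only [Matrix.conjTranspose_add, Matrix.conjTranspose_mul, hH]
        noncomm_ring
      have h1 : ‖Ult (k + 1)‖ ^ 2 = ‖(Ult (k + 1))ᴴ * Ult (k + 1)‖ := by
        rw [Matrix.l2_opNorm_conjTranspose_mul_self]; ring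
      have h2 : ‖(Ult k)ᴴ * Ult k‖ = ‖Ult k‖ ^ 2 := by
        rw [Matrix.l2_opNorm_conjTranspose_mul_self]; ring
      have h3 : ‖(Δ k * Ult k)ᴴ * (Δ k * Ult k)‖ = ‖Δ k * Ult k‖ ^ 2 := by
        rw [Matrix.l2_opNorm_conjTranspose_mul_self]; ring
      have h4 : ‖Δ k * Ult k‖ ≤ c k * ‖Ult k‖ :=
        le_trans (Matrix.l2_opNorm_mul _ _)
          (mul_le_mul_of_nonneg_right (hΔnorm k) (norm_nonneg _))
      have h5 : ‖Ult (k + 1)‖ ^ 2 ≤ (1 + c k ^ 2) * ‖Ult k‖ ^ 2 := by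
        rw [h1, hCT]
        calc ‖(Ult k)ᴴ * Ult k + (Δ k * Ult k)ᴴ * (Δ k * Ult k)‖
            ≤ ‖(Ult k)ᴴ * Ult k‖ + ‖(Δ k * Ult k)ᴴ * (Δ k * Ult k)‖ := norm_add_le _ _
          _ = ‖Ult k‖ ^ 2 + ‖Δ k * Ult k‖ ^ 2 := by rw [h2, h3]
          _ ≤ ‖Ult k‖ ^ 2 + (c k * ‖Ult k‖) ^ 2 := by
              nlinarith [norm_nonneg (Δ k * Ult k), norm_nonneg (Ult k), h4]
          _ = (1 + c k ^ 2) * ‖Ult k‖ ^ 2 := by ring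
      rw [hins, Finset.prod_insert hnotmem]
      calc ‖Ult (k + 1)‖ ^ 2 ≤ (1 + c k ^ 2) * ‖Ult k‖ ^ 2 := h5
        _ ≤ (1 + c k ^ 2) * ∏ k' ∈ Finset.Ioo (-M) k, (1 + c k' ^ 2) := by
            apply mul_le_mul_of_nonneg_left ih
            nlinarith [hc k]
  -- the product is at most 2
  have hprod : ∀ k : ℤ, (∏ k' ∈ Finset.Ioo (-M) k, (1 + c k' ^ 2)) ≤ 2 := by
    intro k
    have h1 : (∏ k' ∈ Finset.Ioo (-M) k, (1 + c k' ^ 2))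
        ≤ ∏ k' ∈ Finset.Ioo (-M) k, Real.exp (c k' ^ 2) := by
      apply Finset.prod_le_prod
      · intro i _; nlinarith [hc i]
      · intro i _
        have := Real.add_one_le_exp (c i ^ 2)
        linarith
    rw [← Real.exp_sum] at h1
    have h2 : (∑ k' ∈ Finset.Ioo (-M) k, c k' ^ 2) ≤ ∑' k' : ℤ, c k' ^ 2 := by
      apply Summable.sum_le_tsum _ (fun i _ => sq_nonneg (c i)) hcsum
    have h3 : Real.exp (∑ k' ∈ Finset.Ioo (-M) k, c k' ^ 2) ≤ Real.exp (Real.log 2) := by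
      apply Real.exp_le_exp.mpr
      have := Real.log_two_gt_d9
      linarith
    rw [Real.exp_log (by norm_num : (0:ℝ) < 2)] at h3
    linarith
  -- norm of Ult k squared is at most 2 for all k
  have hUltsq : ∀ k : ℤ, ‖Ult k‖ ^ 2 ≤ 2 := by
    intro k
    rcases le_or_gt k (-M + 1) with h | h
    · have he : Finset.Ioo (-M) k = (∅ : Finset ℤ) := by
        apply Finset.eq_empty_of_forall_notMem
        intro x hx
        simp only [Finset.mem_Ioo] at hx
        omega
      rw [hUlt, he]
      simp [hnorm_one]
    · exact le_trans (key k h.le) (hprod k)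
  intro k
  have hUltle : ‖Ult k‖ ≤ Real.sqrt 2 := by
    rw [Real.le_sqrt (norm_nonneg _) (by norm_num)]
    exact hUltsq k
  refine ⟨hUltle, ?_⟩
  rw [hU k]
  calc ‖Δ k * Ult k‖ ≤ ‖Δ k‖ * ‖Ult k‖ := Matrix.l2_opNorm_mul _ _
    _ ≤ c k * Real.sqrt 2 := by
        apply mul_le_mul (hΔnorm k) hUltle (norm_nonneg _) (hc k)
    _ = Real.sqrt 2 * c k := mul_comm _ _
end
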